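/- Let u : V(𝕋) × ℤ≥0 → ℂ be a function on the k-regular tree and M_u(x,r,n) its spherical mean in x. Then the spherical mean commutes with the Laplacian: M_{Δ_𝕋 u}(x,r,n) = k·M_u(x,r,n) − (k−1)·M_u(x,r+1,n) − M_u(x,r−1,n) = Δ_𝕋(M_u)(x,r,n) for all r ≥ 1. -/

import Mathlib

open scoped BigOperators

/-- Size of the sphere of radius `r` in the `k`-regular tree. -/
def sphereSize (k r : ℕ) : ℕ := if r = 0 then 1 else k * (k - 1) ^ (r - 1)

/-- Spherical mean `M_φ(x,r) = (1/S(r)) Σ_{d(x,z)=r} φ(z)` in the `k`-regular tree. -/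
noncomputable def sphericalMean {V : Type*} (G : SimpleGraph V) (k : ℕ) (φ : V → ℂ)
    (x : V) (r : ℕ) : ℂ :=
  ((sphereSize k r : ℂ))⁻¹ * ∑' z : {z : V | G.dist x z = r}, φ z.1

/-- The combinatorial Laplacian `Δ φ(x) = deg(x)·φ(x) - Σ_{y∼x} φ(y)`. -/
noncomputable def graphLaplacian {V : Type*} (G : SimpleGraph V)
    [∀ v, Fintype (G.neighborSet v)] (φ : V → ℂ) (x : V) : ℂ :=
  (G.degree x : ℂ) * φ x - ∑ y ∈ G.neighborFinset x, φ y

/-!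
In the tree every neighbour of a vertex at distance `m + 1` from `x` lies at distance `m` or
`m + 2`; a vertex at distance `m + 2` has exactly one neighbour at distance `m + 1`, and a vertex
at distance `m` has `b_m` of them (`k` if `m = 0`, `k - 1` otherwise). Double counting adjacent
pairs gives `∑_{z ∈ S_{m+1}(x)} ∑_{y ∼ z} φ y = ∑_{S_{m+2}(x)} φ + b_m ∑_{S_m(x)} φ`, and the same
count gives this value for `∑_{y ∼ x} ∑_{z ∈ S_{m+1}(y)} φ z`. Both identities follow after
dividing by `S(m + 1)`, since `S(m + 2) = (k - 1) S(m + 1)` and `S(m + 1) = b_m S(m)`.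
-/

open Finset

def forwardDegree (k r : ℕ) : ℕ := if r = 0 then k else k - 1

lemma sphereSize_succ (k r : ℕ) : sphereSize k (r + 1) = sphereSize k r * forwardDegree k r := by
  cases r <;> simp [sphereSize, forwardDegree, pow_succ, mul_assoc]

lemma forwardDegree_pos {k : ℕ} (hk : 2 ≤ k) (r : ℕ) : 0 < forwardDegree k r := by
  unfold forwardDegree; split <;> omega

lemma sphereSize_pos {k : ℕ} (hk : 2 ≤ k) : ∀ r, 0 < sphereSize k r
  | 0 => by simp [sphereSize]
  | r + 1 => by
    rw [sphereSize_succ]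
    exact Nat.mul_pos (sphereSize_pos hk r) (forwardDegree_pos hk r)

namespace SimpleGraph

variable {V : Type*} {G : SimpleGraph V} {x z : V} {r : ℕ}

lemma Connected.exists_adj_dist_eq_of_dist_eq_succ (hG : G.Connected) (hz : G.dist x z = r + 1) :
    ∃ y, G.Adj z y ∧ G.dist x y = r := by
  obtain ⟨p, hp⟩ := hG.exists_walk_length_eq_dist z x
  cases p with
  | nil => simp at hz
  | @cons _ y _ hzy q =>
    refine ⟨y, hzy, le_antisymm ?_ ?_⟩
    · rw [dist_comm]
      have := dist_le q
      rw [Walk.length_cons, dist_comm, hz] at hp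
      omega
    · have := (hG.dist_triangle : G.dist x z ≤ G.dist x y + G.dist y z)
      rw [dist_eq_one_iff_adj.2 hzy.symm] at this
      omega

lemma IsAcyclic.eq_penultimate_of_adj_of_dist_lt {y : V} (hG : G.IsAcyclic)
    (hreach : G.Reachable x y) {q : G.Walk x z} (hq : q.IsPath) (hadj : G.Adj z y)
    (hlt : G.dist x y < G.dist x z) : y = q.penultimate := by
  classical
  obtain ⟨p, hp, hpl⟩ := hreach.exists_path_of_dist
  have hz : z ∉ p.support := fun hz =>
    hlt.not_ge ((dist_le _).trans ((p.length_takeUntil_le_length hz).trans hpl.le))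
  exact hG.eq_penultimate_of_adj_end hq hadj
    (hG.mem_support_of_ne_mem_support_of_adj_of_isPath hq hp hadj hz)

lemma IsTree.existsUnique_adj_dist_eq (hG : G.IsTree) (hz : G.dist x z = r + 1) :
    ∃! y, G.Adj z y ∧ G.dist x y = r := by
  obtain ⟨y, hy⟩ := hG.connected.exists_adj_dist_eq_of_dist_eq_succ hz
  obtain ⟨q, hq, -⟩ := hG.connected.exists_path_of_dist x z
  have hparent : ∀ w, G.Adj z w ∧ G.dist x w = r → w = q.penultimate := fun w hw =>
    hG.isAcyclic.eq_penultimate_of_adj_of_dist_lt (hG.connected x w) hq hw.1 (by omega)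
  exact ⟨y, hy, fun w hw => (hparent w hw).trans (hparent y hy).symm⟩

variable [G.LocallyFinite]

lemma Connected.finite_setOf_dist_eq (hG : G.Connected) (x : V) :
    ∀ r, {z | G.dist x z = r}.Finite
  | 0 => (Set.finite_singleton x).subset fun _ hz => (hG.dist_eq_zero_iff.1 hz).symm
  | r + 1 => ((hG.finite_setOf_dist_eq x r).biUnion fun y _ => (G.neighborSet y).toFinite).subset
      fun _ hz => by
        obtain ⟨y, hzy, hy⟩ := hG.exists_adj_dist_eq_of_dist_eq_succ hz
        exact Set.mem_biUnion hy hzy.symm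

noncomputable def Connected.sphereFinset (hG : G.Connected) (x : V) (r : ℕ) : Finset V :=
  (hG.finite_setOf_dist_eq x r).toFinset

@[simp]
lemma Connected.mem_sphereFinset (hG : G.Connected) : z ∈ hG.sphereFinset x r ↔ G.dist x z = r :=
  Set.Finite.mem_toFinset _

lemma Connected.tsum_setOf_dist_eq {M : Type*} [AddCommMonoid M] [TopologicalSpace M]
    (hG : G.Connected) (φ : V → M) (x : V) (r : ℕ) :
    ∑' z : {z | G.dist x z = r}, φ z = ∑ z ∈ hG.sphereFinset x r, φ z := by
  rw [← Finset.tsum_subtype', Connected.sphereFinset, Set.Finite.coe_toFinset]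

variable {k : ℕ}

lemma IsTree.card_filter_neighborFinset_dist_eq_pred (hG : G.IsTree) (hz : G.dist x z = r + 1) :
    #{y ∈ G.neighborFinset z | G.dist x y = r} = 1 := by
  rw [card_eq_one_iff_existsUnique]
  simpa only [mem_filter, mem_neighborFinset] using hG.existsUnique_adj_dist_eq hz

lemma IsTree.card_filter_neighborFinset_dist_eq_succ (hG : G.IsTree)
    (hreg : G.IsRegularOfDegree k) (hz : G.dist x z = r) :
    #{y ∈ G.neighborFinset z | G.dist x y = r + 1} = forwardDegree k r := by
  have hsplit := card_filter_add_card_filter_not (s := G.neighborFinset z)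
    (fun y => G.dist x y = r + 1)
  have hparents : {y ∈ G.neighborFinset z | ¬G.dist x y = r + 1}
      = {y ∈ G.neighborFinset z | G.dist x y + 1 = r} := filter_congr fun y hy => by
    have := hG.dist_eq_dist_add_one_of_adj x (mem_neighborFinset _ _ _ |>.1 hy)
    omega
  rw [hparents, card_neighborFinset_eq_degree, hreg] at hsplit
  cases r with
  | zero => simpa [forwardDegree] using hsplit
  | succ m =>
    simp only [Nat.add_right_cancel_iff] at hsplit
    rw [hG.card_filter_neighborFinset_dist_eq_pred hz] at hsplit
    simp only [forwardDegree, Nat.succ_ne_zero, if_false]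
    omega

lemma Connected.sum_sphereFinset_union_sum_const {M : Type*} [AddCommMonoid M] [DecidableEq V]
    (hG : G.Connected) (φ : V → M) {m b : ℕ} (s : V → Finset V)
    (hfar : ∀ y, G.dist x y = m + 2 → #(s y) = 1) (hnear : ∀ y, G.dist x y = m → #(s y) = b) :
    ∑ y ∈ hG.sphereFinset x (m + 2) ∪ hG.sphereFinset x m, ∑ _z ∈ s y, φ y
      = ∑ y ∈ hG.sphereFinset x (m + 2), φ y + b • ∑ y ∈ hG.sphereFinset x m, φ y := by
  have hdisj : Disjoint (hG.sphereFinset x (m + 2)) (hG.sphereFinset x m) :=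
    Finset.disjoint_left.2 fun y h₁ h₂ => by rw [hG.mem_sphereFinset] at h₁ h₂; omega
  simp only [sum_union hdisj, sum_const, smul_sum]
  congr 1 <;> refine sum_congr rfl fun y hy => ?_
  · rw [hfar y (hG.mem_sphereFinset.1 hy), one_smul]
  · rw [hnear y (hG.mem_sphereFinset.1 hy)]

lemma IsTree.sum_sphereFinset_sum_neighborFinset {M : Type*} [AddCommMonoid M] (hG : G.IsTree)
    (hreg : G.IsRegularOfDegree k) (φ : V → M) (x : V) (m : ℕ) :
    ∑ z ∈ hG.connected.sphereFinset x (m + 1), ∑ y ∈ G.neighborFinset z, φ y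
      = ∑ y ∈ hG.connected.sphereFinset x (m + 2), φ y
        + forwardDegree k m • ∑ y ∈ hG.connected.sphereFinset x m, φ y := by
  classical
  rw [sum_comm' (t' := hG.connected.sphereFinset x (m + 2) ∪ hG.connected.sphereFinset x m)
    (s' := fun y => {z ∈ G.neighborFinset y | G.dist x z = m + 1})]
  · exact hG.connected.sum_sphereFinset_union_sum_const φ _
      (fun y hy => hG.card_filter_neighborFinset_dist_eq_pred hy)
      (fun y hy => hG.card_filter_neighborFinset_dist_eq_succ hreg hy)
  · intro z y
    simp only [Connected.mem_sphereFinset, mem_neighborFinset, mem_filter, mem_union, adj_comm]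
    exact ⟨fun ⟨hz, hzy⟩ => ⟨⟨hzy, hz⟩, by have := hG.dist_eq_dist_add_one_of_adj x hzy; omega⟩,
      fun h => ⟨h.1.2, h.1.1⟩⟩

lemma IsTree.sum_neighborFinset_sum_sphereFinset {M : Type*} [AddCommMonoid M] (hG : G.IsTree)
    (hreg : G.IsRegularOfDegree k) (φ : V → M) (x : V) (m : ℕ) :
    ∑ y ∈ G.neighborFinset x, ∑ z ∈ hG.connected.sphereFinset y (m + 1), φ z
      = ∑ z ∈ hG.connected.sphereFinset x (m + 2), φ z
        + forwardDegree k m • ∑ z ∈ hG.connected.sphereFinset x m, φ z := by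
  classical
  rw [sum_comm' (t' := hG.connected.sphereFinset x (m + 2) ∪ hG.connected.sphereFinset x m)
    (s' := fun z => {y ∈ G.neighborFinset x | G.dist z y = m + 1})]
  · exact hG.connected.sum_sphereFinset_union_sum_const φ _
      (fun z hz => hG.card_filter_neighborFinset_dist_eq_pred (by rwa [dist_comm]))
      (fun z hz => hG.card_filter_neighborFinset_dist_eq_succ hreg (by rwa [dist_comm]))
  · intro y z
    simp only [Connected.mem_sphereFinset, mem_neighborFinset, mem_filter, mem_union]
    rw [dist_comm (u := y) (v := z), dist_comm (u := x) (v := z)]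
    exact ⟨fun h => ⟨h, by have := hG.dist_eq_dist_add_one_of_adj z h.1; omega⟩, And.left⟩

lemma Connected.sphericalMean_eq_sum (hG : G.Connected) (k : ℕ) (φ : V → ℂ) (x : V) (r : ℕ) :
    sphericalMean G k φ x r = (sphereSize k r : ℂ)⁻¹ * ∑ z ∈ hG.sphereFinset x r, φ z := by
  rw [sphericalMean, hG.tsum_setOf_dist_eq]

lemma Connected.sub_one_mul_sphericalMean_add_sphericalMean (hG : G.Connected) (hk : 2 ≤ k) (φ : V → ℂ)
    (x : V) (m : ℕ) :
    ((k : ℂ) - 1) * sphericalMean G k φ x (m + 2) + sphericalMean G k φ x m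
      = (sphereSize k (m + 1) : ℂ)⁻¹ * (∑ z ∈ hG.sphereFinset x (m + 2), φ z
        + forwardDegree k m • ∑ z ∈ hG.sphereFinset x m, φ z) := by
  have hS : (sphereSize k m : ℂ) ≠ 0 := by exact_mod_cast (sphereSize_pos hk m).ne'
  have hb : (forwardDegree k m : ℂ) ≠ 0 := by exact_mod_cast (forwardDegree_pos hk m).ne'
  have hk₁ : (k : ℂ) - 1 ≠ 0 := sub_ne_zero.2 (by exact_mod_cast (by omega : k ≠ 1))
  have hb₁ : (forwardDegree k (m + 1) : ℂ) = k - 1 := by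
    simp [forwardDegree, Nat.cast_sub (by omega : 1 ≤ k)]
  rw [hG.sphericalMean_eq_sum, hG.sphericalMean_eq_sum, nsmul_eq_mul, sphereSize_succ k (m + 1),
    sphereSize_succ k m]
  push_cast
  rw [hb₁]
  field_simp

lemma IsRegularOfDegree.sum_graphLaplacian (hreg : G.IsRegularOfDegree k) (φ : V → ℂ)
    (s : Finset V) :
    ∑ z ∈ s, graphLaplacian G φ z = k * ∑ z ∈ s, φ z - ∑ z ∈ s, ∑ y ∈ G.neighborFinset z, φ y := by
  simp only [graphLaplacian, hreg _, sum_sub_distrib, mul_sum]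

end SimpleGraph

/-- On the `k`-regular tree, for `r ≥ 1` the spherical mean commutes with
the combinatorial Laplacian:
`M_{Δu}(x,r,n) = k M_u(x,r,n) - (k-1) M_u(x,r+1,n) - M_u(x,r-1,n) = Δ(M_u)(x,r,n)`. -/
theorem sphericalMean_comm_laplacian {V : Type*} (G : SimpleGraph V)
    [∀ v, Fintype (G.neighborSet v)]
    (k : ℕ) (hk : 2 ≤ k) (hconn : G.Connected) (hacyc : G.IsAcyclic)
    (hreg : G.IsRegularOfDegree k) (u : V → ℕ → ℂ) (x : V) (r n : ℕ) (hr : 1 ≤ r) :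
    sphericalMean G k (graphLaplacian G (fun z => u z n)) x r
        = (k : ℂ) * sphericalMean G k (fun z => u z n) x r
          - ((k : ℂ) - 1) * sphericalMean G k (fun z => u z n) x (r + 1)
          - sphericalMean G k (fun z => u z n) x (r - 1) ∧
    sphericalMean G k (graphLaplacian G (fun z => u z n)) x r
        = (k : ℂ) * sphericalMean G k (fun z => u z n) x r
          - ∑ y ∈ G.neighborFinset x, sphericalMean G k (fun z => u z n) y r := by
  obtain ⟨m, rfl⟩ : ∃ m, r = m + 1 := ⟨r - 1, by omega⟩
  have hG : G.IsTree := ⟨hconn, hacyc⟩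
  set φ : V → ℂ := fun z => u z n
  set shell := ∑ z ∈ hconn.sphereFinset x (m + 2), φ z
    + forwardDegree k m • ∑ z ∈ hconn.sphereFinset x m, φ z
  have hlap : sphericalMean G k (graphLaplacian G φ) x (m + 1)
      = k * sphericalMean G k φ x (m + 1) - (sphereSize k (m + 1) : ℂ)⁻¹ * shell := by
    rw [hconn.sphericalMean_eq_sum, hconn.sphericalMean_eq_sum, hreg.sum_graphLaplacian,
      hG.sum_sphereFinset_sum_neighborFinset hreg]
    ring
  have hradial : ((k : ℂ) - 1) * sphericalMean G k φ x (m + 2) + sphericalMean G k φ x m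
      = (sphereSize k (m + 1) : ℂ)⁻¹ * shell :=
    hconn.sub_one_mul_sphericalMean_add_sphericalMean hk φ x m
  have hneighbors : ∑ y ∈ G.neighborFinset x, sphericalMean G k φ y (m + 1)
      = (sphereSize k (m + 1) : ℂ)⁻¹ * shell := by
    simp_rw [hconn.sphericalMean_eq_sum, ← mul_sum]
    rw [hG.sum_neighborFinset_sum_sphereFinset hreg]
  constructor
  · rw [hlap, Nat.add_sub_cancel, ← hradial]
    ring
  · rw [hlap, hneighbors]
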